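/- Let H and K be complex inner product spaces with dim(H) ≥ 2, and let A : H → K be a non-zero additive mapping preserving Euclidean orthogonality. Then the following statements are equivalent: (a) A is complex-linear or conjugate-linear; (b) for every z ∈ H, A(i z) ∈ {i A(z), -i A(z)}; (c) there exists a non-zero z ∈ H with A(i z) ∈ {i A(z), -i A(z)}; (d) there exists a non-zero z ∈ H such that i A(z) ∈ A(H). -/

import Mathlib

/-! For orthogonal `e, f` of equal norm, `ζ • e + μ • f` is orthogonal to `(ν * conj μ) • e -
(ν * conj ζ) • f`; applying `A` and expanding gives `⟪A (ζ • e), A (ν • e)⟫ =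
⟪A e, A ((ν * conj ζ) • e)⟫`, so on `span {e, f}` the form `⟪A u, A v⟫` depends only on `⟪u, v⟫`.
In particular `t ↦ re ⟪A e, A (t • e)⟫` is additive on `ℝ` and nonnegative on `[0, ∞)`, hence
linear, which forces `A` to be real-linear. Then `⟪A u, A v⟫ = a * ⟪u, v⟫ + b * ⟪v, u⟫` on every
such plane; as `dim H ≥ 2`, any two vectors lie in one plane and planes through a common nonzero
vector share `a, b`, so this identity holds on all of `H`. Finally
`‖A (l • z) - l • A z‖² = 4 b (im l)² ‖z‖²` and `‖A (l • z) - conj l • A z‖² = 4 a (im l)² ‖z‖²`,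
so each of the four conditions is equivalent to `a = 0 ∨ b = 0`. -/

open scoped ComplexInnerProductSpace
open Complex ComplexConjugate

theorem AddMonoidHom.apply_eq_mul_of_map_nonneg (g : ℝ →+ ℝ) (hg : ∀ t, 0 ≤ t → 0 ≤ g t)
    (t : ℝ) : g t = t * g 1 := by
  have hmono : Monotone g := fun s t hst => by
    simpa [map_sub] using hg (t - s) (sub_nonneg.2 hst)
  have hcont := MeasureTheory.Measure.AddMonoidHom.continuous_of_measurable g hmono.measurable
  simpa using map_real_smul g hcont t 1

section

variable {H K : Type*} [NormedAddCommGroup H] [InnerProductSpace ℂ H]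
  [NormedAddCommGroup K] [InnerProductSpace ℂ K]

theorem exists_ne_zero_inner_eq_zero (hdim : 2 ≤ Module.rank ℂ H) (x : H) :
    ∃ y ≠ 0, ⟪x, y⟫ = 0 := by
  have hx : (ℂ ∙ x) ≠ ⊤ := by
    intro h
    have := (rank_span_le (R := ℂ) ({x} : Set H)).trans_eq (Cardinal.mk_singleton x)
    rw [h, rank_top] at this
    exact absurd (hdim.trans this) (by norm_num)
  obtain ⟨y, hy, hy0⟩ := (Submodule.ne_bot_iff _).1 (mt Submodule.orthogonal_eq_bot_iff.1 hx)
  exact ⟨y, hy0, Submodule.mem_orthogonal_singleton_iff_inner_right.1 hy⟩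

theorem exists_inner_eq_zero_norm_eq (hdim : 2 ≤ Module.rank ℂ H) (x : H) :
    ∃ f, ⟪x, f⟫ = 0 ∧ ‖x‖ = ‖f‖ := by
  obtain ⟨y, hy0, hxy⟩ := exists_ne_zero_inner_eq_zero hdim x
  refine ⟨((‖x‖ : ℂ) * (‖y‖ : ℂ)⁻¹) • y, by rw [inner_smul_right, hxy, mul_zero], ?_⟩
  exact (norm_smul_inv_norm' (norm_nonneg x) hy0).symm

theorem exists_inner_eq_zero_norm_eq_mem_span_pair (hdim : 2 ≤ Module.rank ℂ H) {u : H}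
    (hu : u ≠ 0) (v : H) :
    ∃ f, ⟪u, f⟫ = 0 ∧ ‖u‖ = ‖f‖ ∧ v ∈ Submodule.span ℂ {u, f} := by
  set w := v - (⟪u, v⟫ / ⟪u, u⟫) • u with hw
  have huw : ⟪u, w⟫ = 0 := by
    rw [hw, inner_sub_right, inner_smul_right, div_mul_cancel₀ _ (inner_self_ne_zero.2 hu),
      sub_self]
  rcases eq_or_ne w 0 with hw0 | hw0
  · obtain ⟨f, huf, hnf⟩ := exists_inner_eq_zero_norm_eq hdim u
    refine ⟨f, huf, hnf, Submodule.mem_span_pair.2 ⟨⟪u, v⟫ / ⟪u, u⟫, 0, ?_⟩⟩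
    rw [zero_smul, add_zero, ← sub_eq_zero, ← neg_sub, ← hw, hw0, neg_zero]
  · refine ⟨((‖u‖ : ℂ) * (‖w‖ : ℂ)⁻¹) • w, by rw [inner_smul_right, huw, mul_zero],
      (norm_smul_inv_norm' (norm_nonneg u) hw0).symm,
      Submodule.mem_span_pair.2 ⟨⟪u, v⟫ / ⟪u, u⟫, (‖w‖ : ℂ) * (‖u‖ : ℂ)⁻¹, ?_⟩⟩
    have hu' : (‖u‖ : ℂ) ≠ 0 := by simpa using hu
    have hw' : (‖w‖ : ℂ) ≠ 0 := by simpa using hw0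
    rw [smul_smul, show (‖w‖ : ℂ) * (‖u‖ : ℂ)⁻¹ * ((‖u‖ : ℂ) * (‖w‖ : ℂ)⁻¹) = 1 by field_simp,
      one_smul, hw, add_sub_cancel]

def PreservesOrthogonality (A : H → K) : Prop :=
  ∀ x y, ⟪x, y⟫ = 0 → ⟪A x, A y⟫ = 0

def InnerMapEqOn (A : H → K) (a b : ℂ) (p : Submodule ℂ H) : Prop :=
  ∀ u ∈ p, ∀ v ∈ p, ⟪A u, A v⟫ = a * ⟪u, v⟫ + b * ⟪v, u⟫

namespace PreservesOrthogonality

variable {A : H →+ K}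

theorem inner_map_smul_eq (hA : PreservesOrthogonality A) {e f : H} (hef : ⟪e, f⟫ = 0)
    (hn : ‖e‖ = ‖f‖) (ζ μ ν : ℂ) :
    ⟪A (ζ • e), A ((ν * conj μ) • e)⟫ = ⟪A (μ • f), A ((ν * conj ζ) • f)⟫ := by
  have hfe : ⟪f, e⟫ = 0 := inner_eq_zero_symm.1 hef
  have horth : ⟪ζ • e + μ • f, (ν * conj μ) • e - (ν * conj ζ) • f⟫ = 0 := by
    simp only [inner_add_left, inner_sub_right, inner_smul_left, inner_smul_right, hef, hfe,
      inner_self_eq_norm_sq_to_K, hn]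
    ring
  have hcross₁ : ⟪A (ζ • e), A ((ν * conj ζ) • f)⟫ = 0 :=
    hA _ _ (by rw [inner_smul_left, inner_smul_right, hef, mul_zero, mul_zero])
  have hcross₂ : ⟪A (μ • f), A ((ν * conj μ) • e)⟫ = 0 :=
    hA _ _ (by rw [inner_smul_left, inner_smul_right, hfe, mul_zero, mul_zero])
  have h := hA _ _ horth
  simp only [map_add, map_sub, inner_add_left, inner_sub_right, hcross₁, hcross₂] at h
  linear_combination h

theorem inner_map_smul_map_smul (hA : PreservesOrthogonality A) {e f : H} (hef : ⟪e, f⟫ = 0)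
    (hn : ‖e‖ = ‖f‖) (ζ ν : ℂ) :
    ⟪A (ζ • e), A (ν • e)⟫ = ⟪A e, A ((ν * conj ζ) • e)⟫ := by
  have h₁ := hA.inner_map_smul_eq hef hn ζ 1 ν
  have h₂ := hA.inner_map_smul_eq (inner_eq_zero_symm.1 hef) hn.symm 1 1 (ν * conj ζ)
  simp only [map_one, mul_one, one_smul] at h₁ h₂
  rw [h₁, h₂]

theorem map_ofReal_smul (hdim : 2 ≤ Module.rank ℂ H) (hA : PreservesOrthogonality A) (t : ℝ)
    (x : H) : A ((t : ℂ) • x) = (t : ℂ) • A x := by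
  obtain ⟨f, hxf, hn⟩ := exists_inner_eq_zero_norm_eq hdim x
  have hline := hA.inner_map_smul_map_smul hxf hn
  let g : ℝ →+ ℝ := AddMonoidHom.mk' (fun s => re ⟪A x, A ((s : ℂ) • x)⟫) fun s s' => by
    simp only [ofReal_add, add_smul, map_add, inner_add_right, add_re]
  have hg_sq : ∀ s : ℝ, g (s * s) = ‖A ((s : ℂ) • x)‖ ^ 2 := fun s => by
    rw [← inner_self_eq_norm_sq (𝕜 := ℂ), hline, conj_ofReal, ← ofReal_mul]
    rfl
  have hg1 : g 1 = ‖A x‖ ^ 2 := by simpa using hg_sq 1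
  have hg_nonneg : ∀ s, 0 ≤ s → 0 ≤ g s := fun s hs => by
    rw [← Real.mul_self_sqrt hs, hg_sq]
    positivity
  have hg : ∀ s, g s = s * ‖A x‖ ^ 2 := fun s => by
    rw [g.apply_eq_mul_of_map_nonneg hg_nonneg, hg1]
  have hnorm : ‖A ((t : ℂ) • x) - (t : ℂ) • A x‖ ^ 2 = 0 := by
    have hcross : RCLike.re ⟪A ((t : ℂ) • x), (t : ℂ) • A x⟫ = t * g t := by
      rw [RCLike.re_to_complex, inner_smul_right, ← inner_conj_symm, re_ofReal_mul, conj_re]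
      rfl
    rw [norm_sub_sq (𝕜 := ℂ), hcross, ← hg_sq, hg, hg, norm_smul, norm_real, Real.norm_eq_abs,
      mul_pow, sq_abs]
    ring
  rwa [sq_eq_zero_iff, norm_eq_zero, sub_eq_zero] at hnorm

theorem inner_map_map_smul (hdim : 2 ≤ Module.rank ℂ H) (hA : PreservesOrthogonality A)
    (x : H) (w : ℂ) :
    ⟪A x, A (w • x)⟫ = w.re * ⟪A x, A x⟫ + w.im * ⟪A x, A (I • x)⟫ := by
  conv_lhs => rw [← re_add_im w, add_smul, mul_smul, map_add, hA.map_ofReal_smul hdim,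
    hA.map_ofReal_smul hdim, inner_add_right, inner_smul_right, inner_smul_right]

theorem exists_inner_eq_mul_inner_self (hA : PreservesOrthogonality A) {e f : H}
    (hef : ⟪e, f⟫ = 0) (hn : ‖e‖ = ‖f‖) {u v : H} (hu : u ∈ Submodule.span ℂ {e, f})
    (hv : v ∈ Submodule.span ℂ {e, f}) :
    ∃ z : ℂ, ⟪u, v⟫ = z * ⟪e, e⟫ ∧ ⟪A u, A v⟫ = ⟪A e, A (z • e)⟫ := by
  have hfe : ⟪f, e⟫ = 0 := inner_eq_zero_symm.1 hef
  obtain ⟨ζ, μ, rfl⟩ := Submodule.mem_span_pair.1 hu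
  obtain ⟨ζ', μ', rfl⟩ := Submodule.mem_span_pair.1 hv
  refine ⟨ζ' * conj ζ + μ' * conj μ, ?_, ?_⟩
  · simp only [inner_add_left, inner_add_right, inner_smul_left, inner_smul_right, hef, hfe,
      inner_self_eq_norm_sq_to_K, hn]
    ring
  have hcross₁ : ⟪A (ζ • e), A (μ' • f)⟫ = 0 :=
    hA _ _ (by rw [inner_smul_left, inner_smul_right, hef, mul_zero, mul_zero])
  have hcross₂ : ⟪A (μ • f), A (ζ' • e)⟫ = 0 :=
    hA _ _ (by rw [inner_smul_left, inner_smul_right, hfe, mul_zero, mul_zero])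
  have hswap : ⟪A f, A ((μ' * conj μ) • f)⟫ = ⟪A e, A ((μ' * conj μ) • e)⟫ := by
    simpa using (hA.inner_map_smul_eq hef hn 1 1 (μ' * conj μ)).symm
  rw [map_add, map_add, inner_add_left, inner_add_right, inner_add_right, hcross₁, hcross₂,
    hA.inner_map_smul_map_smul hef hn, hA.inner_map_smul_map_smul hfe hn.symm, hswap, add_zero,
    zero_add, add_smul, map_add, inner_add_right]

theorem exists_innerMapEqOn_span_pair (hdim : 2 ≤ Module.rank ℂ H)
    (hA : PreservesOrthogonality A) {e f : H} (hef : ⟪e, f⟫ = 0) (hn : ‖e‖ = ‖f‖) :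
    ∃ a b, InnerMapEqOn A a b (Submodule.span ℂ {e, f}) := by
  refine ⟨(⟪A e, A e⟫ - I * ⟪A e, A (I • e)⟫) / (2 * ⟪e, e⟫),
    (⟪A e, A e⟫ + I * ⟪A e, A (I • e)⟫) / (2 * ⟪e, e⟫), fun u hu v hv => ?_⟩
  obtain ⟨z, huv, hAuv⟩ := hA.exists_inner_eq_mul_inner_self hef hn hu hv
  have hvu : ⟪v, u⟫ = conj z * ⟪e, e⟫ := by
    rw [← inner_conj_symm, huv, map_mul, inner_self_conj]
  rw [hAuv, hA.inner_map_map_smul hdim, huv, hvu]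
  rcases eq_or_ne e 0 with rfl | he
  · simp
  have hn0 : ⟪e, e⟫ ≠ 0 := inner_self_ne_zero.2 he
  rw [re_eq_add_conj, im_eq_sub_conj]
  field_simp
  linear_combination (z - conj z) * ⟪A e, A (I • e)⟫ * I_sq

end PreservesOrthogonality

theorem InnerMapEqOn.unique {A : H → K} {a b a' b' : ℂ} {p q : Submodule ℂ H}
    (h : InnerMapEqOn A a b p) (h' : InnerMapEqOn A a' b' q) {x : H} (hxp : x ∈ p)
    (hxq : x ∈ q) (hx0 : x ≠ 0) : a = a' ∧ b = b' := by
  have h₁ := (h x hxp x hxp).symm.trans (h' x hxq x hxq)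
  have h₂ := (h x hxp _ (p.smul_mem I hxp)).symm.trans (h' x hxq _ (q.smul_mem I hxq))
  simp only [inner_smul_left, inner_smul_right, conj_I] at h₂
  have hn : ⟪x, x⟫ ≠ 0 := inner_self_ne_zero.2 hx0
  have hsum : a + b = a' + b' := mul_right_cancel₀ hn (by linear_combination h₁)
  have hdiff : a - b = a' - b' :=
    mul_right_cancel₀ (mul_ne_zero I_ne_zero hn) (by linear_combination h₂)
  constructor
  · linear_combination (hsum + hdiff) / 2
  · linear_combination (hsum - hdiff) / 2

theorem PreservesOrthogonality.exists_inner_map_eq (hdim : 2 ≤ Module.rank ℂ H) {A : H →+ K}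
    (hA : PreservesOrthogonality A) : ∃ a b : ℂ, ∀ u v, ⟪A u, A v⟫ = a * ⟪u, v⟫ + b * ⟪v, u⟫ := by
  have : Nontrivial H := rank_pos_iff_nontrivial.1 (lt_of_lt_of_le (by norm_num) hdim)
  obtain ⟨x₀, hx₀⟩ := exists_ne (0 : H)
  obtain ⟨f₀, hx₀f₀, hn₀⟩ := exists_inner_eq_zero_norm_eq hdim x₀
  obtain ⟨a, b, hab⟩ := hA.exists_innerMapEqOn_span_pair hdim hx₀f₀ hn₀
  refine ⟨a, b, fun u v => ?_⟩
  rcases eq_or_ne u 0 with rfl | hu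
  · simp
  obtain ⟨f, huf, hnf, hv⟩ := exists_inner_eq_zero_norm_eq_mem_span_pair hdim hu v
  obtain ⟨g, hug, hng, hx₀g⟩ := exists_inner_eq_zero_norm_eq_mem_span_pair hdim hu x₀
  obtain ⟨a₁, b₁, hab₁⟩ := hA.exists_innerMapEqOn_span_pair hdim huf hnf
  obtain ⟨a₂, b₂, hab₂⟩ := hA.exists_innerMapEqOn_span_pair hdim hug hng
  have hu₁ : u ∈ Submodule.span ℂ {u, f} := Submodule.subset_span (Set.mem_insert u _)
  obtain ⟨rfl, rfl⟩ := hab₁.unique hab₂ hu₁ (Submodule.subset_span (Set.mem_insert u _)) hu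
  obtain ⟨rfl, rfl⟩ := hab₂.unique hab hx₀g (Submodule.subset_span (Set.mem_insert x₀ _)) hx₀
  exact hab₁ u hu₁ v hv

section InnerMapEq

variable {A : H → K} {a b : ℂ}

theorem inner_self_map_smul_sub_smul (hAab : ∀ u v, ⟪A u, A v⟫ = a * ⟪u, v⟫ + b * ⟪v, u⟫)
    (l : ℂ) (x : H) :
    ⟪A (l • x) - l • A x, A (l • x) - l • A x⟫ = -(b * (l - conj l) ^ 2 * ⟪x, x⟫) := by
  simp only [inner_sub_left, inner_sub_right, inner_smul_left, inner_smul_right, hAab]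
  ring

theorem inner_self_map_smul_sub_conj_smul
    (hAab : ∀ u v, ⟪A u, A v⟫ = a * ⟪u, v⟫ + b * ⟪v, u⟫) (l : ℂ) (x : H) :
    ⟪A (l • x) - conj l • A x, A (l • x) - conj l • A x⟫ = -(a * (l - conj l) ^ 2 * ⟪x, x⟫) := by
  simp only [inner_sub_left, inner_sub_right, inner_smul_left, inner_smul_right, hAab,
    RingHomCompTriple.comp_apply, RingHom.id_apply]
  ring

theorem map_smul_of_inner_map_eq (hAab : ∀ u v, ⟪A u, A v⟫ = a * ⟪u, v⟫ + b * ⟪v, u⟫)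
    (hb : b = 0) (l : ℂ) (x : H) : A (l • x) = l • A x := by
  rw [← sub_eq_zero, ← inner_self_eq_zero (𝕜 := ℂ), inner_self_map_smul_sub_smul hAab, hb,
    zero_mul, zero_mul, neg_zero]

theorem map_smul_conj_of_inner_map_eq (hAab : ∀ u v, ⟪A u, A v⟫ = a * ⟪u, v⟫ + b * ⟪v, u⟫)
    (ha : a = 0) (l : ℂ) (x : H) : A (l • x) = conj l • A x := by
  rw [← sub_eq_zero, ← inner_self_eq_zero (𝕜 := ℂ), inner_self_map_smul_sub_conj_smul hAab, ha,
    zero_mul, zero_mul, neg_zero]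

theorem eq_zero_of_map_I_smul (hAab : ∀ u v, ⟪A u, A v⟫ = a * ⟪u, v⟫ + b * ⟪v, u⟫) {z : H}
    (hz : z ≠ 0) (h : A (I • z) = I • A z) : b = 0 := by
  have h₀ := inner_self_map_smul_sub_smul hAab I z
  rw [h, sub_self, inner_zero_left, conj_I] at h₀
  have : b * ⟪z, z⟫ = 0 := by linear_combination -h₀ / 4 + b * ⟪z, z⟫ * I_sq
  exact (mul_eq_zero.1 this).resolve_right (inner_self_ne_zero.2 hz)

theorem eq_zero_of_map_I_smul_eq_neg (hAab : ∀ u v, ⟪A u, A v⟫ = a * ⟪u, v⟫ + b * ⟪v, u⟫)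
    {z : H} (hz : z ≠ 0) (h : A (I • z) = -(I • A z)) : a = 0 := by
  have h₀ := inner_self_map_smul_sub_conj_smul hAab I z
  rw [conj_I, neg_smul, h, sub_self, inner_zero_left] at h₀
  have : a * ⟪z, z⟫ = 0 := by linear_combination -h₀ / 4 + a * ⟪z, z⟫ * I_sq
  exact (mul_eq_zero.1 this).resolve_right (inner_self_ne_zero.2 hz)

theorem eq_zero_or_eq_zero_of_map_eq_I_smul
    (hAab : ∀ u v, ⟪A u, A v⟫ = a * ⟪u, v⟫ + b * ⟪v, u⟫) {z w : H} (hz : z ≠ 0)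
    (hw : A w = I • A z) : a = 0 ∨ b = 0 := by
  have h₁ := hAab w z
  have h₂ := hAab w (I • z)
  rw [hw, inner_smul_left, conj_I, hAab] at h₁ h₂
  simp only [inner_smul_left, inner_smul_right, conj_I, ← inner_conj_symm z w] at h₁ h₂
  by_contra! hab
  have hp : I * ⟪w, z⟫ = ⟪z, z⟫ := mul_left_cancel₀ hab.1
    (by linear_combination -(I * h₁ + h₂) / 2 - a * ⟪z, z⟫ * I_sq)
  have hp' : I * conj ⟪w, z⟫ = ⟪z, z⟫ := mul_left_cancel₀ hab.2
    (by linear_combination -(I * h₁ - h₂) / 2 - b * ⟪z, z⟫ * I_sq)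
  have hp'' := congrArg conj hp
  rw [map_mul, conj_I, inner_self_conj] at hp''
  exact hz (inner_self_eq_zero (𝕜 := ℂ) |>.1 (by linear_combination -(hp' + hp'') / 2))

theorem tfae_of_inner_map_eq {A : H →+ K}
    (hAab : ∀ u v, ⟪A u, A v⟫ = a * ⟪u, v⟫ + b * ⟪v, u⟫) {z₀ : H} (hz₀ : z₀ ≠ 0) :
    List.TFAE [a = 0 ∨ b = 0,
      (∀ (l : ℂ) (x : H), A (l • x) = l • A x) ∨ ∀ (l : ℂ) (x : H), A (l • x) = conj l • A x,
      ∀ z : H, A (I • z) = I • A z ∨ A (I • z) = -(I • A z),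
      ∃ z : H, z ≠ 0 ∧ (A (I • z) = I • A z ∨ A (I • z) = -(I • A z)),
      ∃ z : H, z ≠ 0 ∧ I • A z ∈ Set.range A] := by
  tfae_have 1 → 2
  | .inl ha => .inr (map_smul_conj_of_inner_map_eq hAab ha)
  | .inr hb => .inl (map_smul_of_inner_map_eq hAab hb)
  tfae_have 2 → 3
  | .inl h, z => .inl (h I z)
  | .inr h, z => .inr (by rw [h, conj_I, neg_smul])
  tfae_have 3 → 4 := fun h => ⟨z₀, hz₀, h z₀⟩
  tfae_have 4 → 1
  | ⟨z, hz, .inl h⟩ => .inr (eq_zero_of_map_I_smul hAab hz h)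
  | ⟨z, hz, .inr h⟩ => .inl (eq_zero_of_map_I_smul_eq_neg hAab hz h)
  tfae_have 4 → 5
  | ⟨z, hz, .inl h⟩ => ⟨z, hz, I • z, h⟩
  | ⟨z, hz, .inr h⟩ => ⟨z, hz, -(I • z), by rw [map_neg, h, neg_neg]⟩
  tfae_have 5 → 1
  | ⟨z, hz, w, hw⟩ => eq_zero_or_eq_zero_of_map_eq_I_smul hAab hz hw
  tfae_finish

end InnerMapEq

end

theorem characterization_complexLinear_additive_op_general
    {H K : Type*} [NormedAddCommGroup H] [InnerProductSpace ℂ H]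
    [NormedAddCommGroup K] [InnerProductSpace ℂ K]
    (hdim : 2 ≤ Module.rank ℂ H)
    (A : H → K)
    (hadd : ∀ x y, A (x + y) = A x + A y)
    (hop : ∀ x y : H, ⟪x, y⟫ = 0 → ⟪A x, A y⟫ = 0) :
    (((∀ (l : ℂ) (x : H), A (l • x) = l • A x) ∨
        (∀ (l : ℂ) (x : H), A (l • x) = (starRingEnd ℂ l) • A x)) ↔
      (∀ z : H,
        A (Complex.I • z) = Complex.I • A z ∨ A (Complex.I • z) = -(Complex.I • A z))) ∧
    ((∀ z : H,
        A (Complex.I • z) = Complex.I • A z ∨ A (Complex.I • z) = -(Complex.I • A z)) ↔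
      (∃ z : H, z ≠ 0 ∧
        (A (Complex.I • z) = Complex.I • A z ∨ A (Complex.I • z) = -(Complex.I • A z)))) ∧
    ((∃ z : H, z ≠ 0 ∧
        (A (Complex.I • z) = Complex.I • A z ∨ A (Complex.I • z) = -(Complex.I • A z))) ↔
      (∃ z : H, z ≠ 0 ∧ Complex.I • A z ∈ Set.range A)) := by
  obtain ⟨a, b, hab⟩ := PreservesOrthogonality.exists_inner_map_eq hdim (A := .mk' A hadd) hop
  have : Nontrivial H := rank_pos_iff_nontrivial.1 (lt_of_lt_of_le (by norm_num) hdim)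
  obtain ⟨z₀, hz₀⟩ := exists_ne (0 : H)
  have h := tfae_of_inner_map_eq hab hz₀
  exact ⟨h.out 1 2, h.out 2 3, h.out 3 4⟩

/-- Characterization of complex-linearity/conjugate-linearity for a non-zero
additive orthogonality preserving map `A` between complex inner product spaces
(`dim H ≥ 2`): (a) `A` complex-linear or conjugate-linear ↔ (b) `A(iz) ∈ {±i A z}`
for all `z` ↔ (c) for some non-zero `z` ↔ (d) `i A(z) ∈ A(H)` for some non-zero `z`. -/
theorem characterization_complexLinear_additive_op
    {H K : Type*} [NormedAddCommGroup H] [InnerProductSpace ℂ H]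
    [NormedAddCommGroup K] [InnerProductSpace ℂ K]
    (hdim : 2 ≤ Module.rank ℂ H)
    (A : H → K) (hA : A ≠ 0)
    (hadd : ∀ x y, A (x + y) = A x + A y)
    (hop : ∀ x y : H, ⟪x, y⟫ = 0 → ⟪A x, A y⟫ = 0) :
    (((∀ (l : ℂ) (x : H), A (l • x) = l • A x) ∨
        (∀ (l : ℂ) (x : H), A (l • x) = (starRingEnd ℂ l) • A x)) ↔
      (∀ z : H,
        A (Complex.I • z) = Complex.I • A z ∨ A (Complex.I • z) = -(Complex.I • A z))) ∧
    ((∀ z : H,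
        A (Complex.I • z) = Complex.I • A z ∨ A (Complex.I • z) = -(Complex.I • A z)) ↔
      (∃ z : H, z ≠ 0 ∧
        (A (Complex.I • z) = Complex.I • A z ∨ A (Complex.I • z) = -(Complex.I • A z)))) ∧
    ((∃ z : H, z ≠ 0 ∧
        (A (Complex.I • z) = Complex.I • A z ∨ A (Complex.I • z) = -(Complex.I • A z))) ↔
      (∃ z : H, z ≠ 0 ∧ Complex.I • A z ∈ Set.range A)) :=
  characterization_complexLinear_additive_op_general hdim A hadd hop
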